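/- The system x^α = Σ_{β ∈ I} a_{α,β} x^β (α ∈ J) has the maximal possible number #I of distinct solutions in K^n if and only if the matrices A_1, ..., A_n pairwise commute and each is diagonalizable. -/

import Mathlib

/-!
A point `x` solves the system iff its monomial vector `v(x) = (x^β)_{β ∈ I}` is a joint
eigenvector of `A_1, …, A_n` with eigenvalues `x_1, …, x_n`. Conversely, since `I` is a lower
set and the rows of `A_i` at `β` with `β + e_i ∈ I` are shifts, every joint eigenvector with
eigenvalues `χ` is a multiple of `v(χ)`, so `χ` is a solution. Joint eigenvectors with distinct
eigenvalue tuples are linearly independent, hence there are at most `#I` solutions, with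
equality iff the `A_i` have a common eigenbasis, i.e. iff they commute and are diagonalizable.
-/

open Finset Matrix

/-- Total degree of a multi-index. -/
def mdeg {n : ℕ} (α : Fin n → ℕ) : ℕ := ∑ i, α i

/-- The set `I = {α ∈ ℤ₊ⁿ : |α| ≤ m}` of multi-indices of total degree at most `m`. -/
def Idx (n m : ℕ) : Finset (Fin n → ℕ) :=
  (Fintype.piFinset fun _ => Finset.range (m + 1)).filter fun α => mdeg α ≤ m

/-- `I` is a lower set of multi-indices. -/
def IsLower {n : ℕ} (I : Finset (Fin n → ℕ)) : Prop :=
  ∀ β ∈ I, ∀ γ : Fin n → ℕ, (∀ i, γ i ≤ β i) → γ ∈ I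

/-- `α` belongs to the border `J` of the lower set `I`. -/
def InBorder {n : ℕ} (I : Finset (Fin n → ℕ)) (α : Fin n → ℕ) : Prop :=
  α ∉ I ∧ ∃ β ∈ I, ∃ i : Fin n, α = β + Pi.single i 1

/-- The multiplication matrix `A_i`: its row indexed by `β ∈ I` is the standard basis
vector at `β + e_i` if `β + e_i ∈ I`, and is `(a_{β+e_i,γ})_{γ∈I}` otherwise. -/
def multMat {K : Type*} [Field K] {n : ℕ} (I : Finset (Fin n → ℕ))
    (a : (Fin n → ℕ) → (Fin n → ℕ) → K) (i : Fin n) : Matrix ↥I ↥I K :=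
  fun β γ =>
    if (β : Fin n → ℕ) + Pi.single i 1 ∈ I then
      (if (γ : Fin n → ℕ) = (β : Fin n → ℕ) + Pi.single i 1 then 1 else 0)
    else a ((β : Fin n → ℕ) + Pi.single i 1) γ

/-- The monomial vector `v(x) = (x^β)_{β ∈ I}`. -/
def monVec {K : Type*} [Field K] {n : ℕ} (I : Finset (Fin n → ℕ)) (x : Fin n → K) :
    ↥I → K :=
  fun β => ∏ i, x i ^ (β : Fin n → ℕ) i

/-- `x` is a solution of the system (1): `x^α = Σ_{β∈I} a_{α,β} x^β` for all `|α| = m+1`. -/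
def IsSol {K : Type*} [Field K] {n : ℕ} (m : ℕ)
    (a : (Fin n → ℕ) → (Fin n → ℕ) → K) (x : Fin n → K) : Prop :=
  ∀ α : Fin n → ℕ, mdeg α = m + 1 →
    ∏ i, x i ^ α i = ∑ β ∈ Idx n m, a α β * ∏ i, x i ^ β i

/-- `x` is a solution of the system for a general lower set `I` with border `J`. -/
def IsSolB {K : Type*} [Field K] {n : ℕ} (I : Finset (Fin n → ℕ))
    (a : (Fin n → ℕ) → (Fin n → ℕ) → K) (x : Fin n → K) : Prop :=
  ∀ α : Fin n → ℕ, InBorder I α →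
    ∏ i, x i ^ α i = ∑ β ∈ I, a α β * ∏ i, x i ^ β i

/-- A square matrix is diagonalizable (semisimple). -/
def Diagonalizable {K : Type*} [Field K] {ι : Type*} [Fintype ι] [DecidableEq ι]
    (A : Matrix ι ι K) : Prop :=
  ∃ P : Matrix ι ι K, IsUnit P.det ∧ (P⁻¹ * A * P).IsDiag

/-- The polynomial `P_α = x^α − Σ_{β∈I} a_{α,β} x^β`. -/
noncomputable def Pb {K : Type*} [Field K] {n : ℕ} (I : Finset (Fin n → ℕ))
    (a : (Fin n → ℕ) → (Fin n → ℕ) → K) (α : Fin n → ℕ) : MvPolynomial (Fin n) K :=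
  MvPolynomial.monomial (Finsupp.equivFunOnFinite.symm α) 1 -
    ∑ β ∈ I, MvPolynomial.C (a α β) * MvPolynomial.monomial (Finsupp.equivFunOnFinite.symm β) 1

/-- The ideal generated by the polynomials `P_α`, `α ∈ J`. -/
noncomputable def PIdeal {K : Type*} [Field K] {n : ℕ} (I : Finset (Fin n → ℕ))
    (a : (Fin n → ℕ) → (Fin n → ℕ) → K) : Ideal (MvPolynomial (Fin n) K) :=
  Ideal.span {p | ∃ α : Fin n → ℕ, InBorder I α ∧ p = Pb I a α}

section Diagonalization

variable {K : Type*} [Field K]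

open Module End

theorem Module.End.maxGenEigenspace_eq_eigenspace_of_iSup_eigenspace_eq_top {V : Type*}
    [AddCommGroup V] [Module K V] {f : End K V} (hf : ⨆ μ, f.eigenspace μ = ⊤) (μ : K) :
    f.maxGenEigenspace μ = f.eigenspace μ := by
  refine le_antisymm (fun v hv => ?_) eigenspace_le_maxGenEigenspace
  have hv' : v ∈ f.eigenspace μ ⊔ ⨆ ν, ⨆ _ : ν ≠ μ, f.eigenspace ν := by
    rw [← iSup_split_single, hf]; trivial
  obtain ⟨u, hu, w, hw, rfl⟩ := Submodule.mem_sup.mp hv'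
  have hw_gen : w ∈ f.maxGenEigenspace μ := by
    simpa using sub_mem hv (eigenspace_le_maxGenEigenspace hu)
  have hw_other : w ∈ ⨆ ν, ⨆ _ : ν ≠ μ, f.maxGenEigenspace ν :=
    iSup₂_mono (fun _ _ => eigenspace_le_maxGenEigenspace) hw
  rw [Submodule.disjoint_def.mp (f.independent_maxGenEigenspace μ) w hw_gen hw_other, add_zero]
  exact hu

theorem Matrix.mul_eq_mul_diagonal_iff {ι : Type*} [Fintype ι] [DecidableEq ι]
    {A P : Matrix ι ι K} {d : ι → K} :
    A * P = P * diagonal d ↔ ∀ j, A *ᵥ P.col j = d j • P.col j := by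
  simp only [← Matrix.ext_iff, mul_diagonal]
  simp only [funext_iff, mul_apply, mulVec, dotProduct, col_apply, Pi.smul_apply, smul_eq_mul]
  rw [forall_comm]
  simp only [mul_comm (d _)]

theorem Matrix.iSup_eigenspace_eq_top_of_diagonalizable {ι : Type*} [Fintype ι] [DecidableEq ι]
    {A : Matrix ι ι K} (hA : Diagonalizable A) : ⨆ μ, eigenspace A.mulVecLin μ = ⊤ := by
  obtain ⟨P, hP, hD⟩ := hA
  have hAP : A * P = P * diagonal (P⁻¹ * A * P).diag := by
    rw [hD.diagonal_diag, ← Matrix.mul_assoc, ← Matrix.mul_assoc, mul_nonsing_inv _ hP,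
      Matrix.one_mul]
  have hspan : Submodule.span K (Set.range P.col) = ⊤ := by
    rw [← range_mulVecLin, LinearMap.range_eq_top]
    exact mulVec_surjective_iff_isUnit.mpr ((isUnit_iff_isUnit_det P).mpr hP)
  rw [eq_top_iff, ← hspan, Submodule.span_le]
  rintro _ ⟨j, rfl⟩
  exact le_iSup (fun μ => eigenspace A.mulVecLin μ) _
    (mem_eigenspace_iff.mpr (mul_eq_mul_diagonal_iff.mp hAP j))

theorem Matrix.iSup_iInf_eigenspace_eq_top_of_commute {ι κ : Type*} [Fintype ι] [DecidableEq ι]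
    (A : κ → Matrix ι ι K) (hcomm : ∀ k l, A k * A l = A l * A k)
    (hdiag : ∀ k, Diagonalizable (A k)) :
    ⨆ χ : κ → K, ⨅ k, eigenspace (A k).mulVecLin (χ k) = ⊤ := by
  have hsup k := iSup_eigenspace_eq_top_of_diagonalizable (hdiag k)
  have hgen k := maxGenEigenspace_eq_eigenspace_of_iSup_eigenspace_eq_top (hsup k)
  simpa only [hgen] using
    iSup_iInf_maxGenEigenspace_eq_top_of_iSup_maxGenEigenspace_eq_top_of_commute
      (fun k => (A k).mulVecLin)
      (fun k l _ => by simp only [Commute, SemiconjBy, mul_eq_comp, ← mulVecLin_mul, hcomm k l])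
      (fun k => by simpa only [hgen] using hsup k)

theorem Matrix.commute_and_diagonalizable_of_linearIndependent {ι κ : Type*} [Fintype ι]
    [DecidableEq ι] (A : κ → Matrix ι ι K) {v : ι → ι → K} (hv : LinearIndependent K v)
    (d : κ → ι → K) (hAv : ∀ k j, A k *ᵥ v j = d k j • v j) :
    (∀ k l, A k * A l = A l * A k) ∧ ∀ k, Diagonalizable (A k) := by
  set P : Matrix ι ι K := (of v)ᵀ
  have hP : IsUnit P.det := (isUnit_iff_isUnit_det P).mp (linearIndependent_cols_iff_isUnit.mp hv)
  have hAP k : A k * P = P * diagonal (d k) := mul_eq_mul_diagonal_iff.mpr (hAv k)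
  have hA k : A k = P * diagonal (d k) * P⁻¹ := by
    rw [← hAP, mul_nonsing_inv_cancel_right (A := P) _ hP]
  refine ⟨fun k l => ?_, fun k => ⟨P, hP, ?_⟩⟩
  · rw [hA k, hA l]
    simp only [Matrix.mul_assoc, nonsing_inv_mul_cancel_left (A := P) _ hP]
    simp only [← Matrix.mul_assoc, diagonal_mul_diagonal, mul_comm (d k _)]
  · rw [Matrix.mul_assoc, hAP, nonsing_inv_mul_cancel_left (A := P) _ hP]
    exact isDiag_diagonal _

/-- No commutativity is needed: the coefficient of `v y` is isolated by applying `f i - χ x i`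
for a coordinate `i` at which `χ y` and `χ x` differ. -/
theorem Module.End.linearIndependent_of_apply_eq_smul {ι S V : Type*} [AddCommGroup V]
    [Module K V] (f : ι → End K V) {v : S → V} {χ : S → ι → K} (hχ : Function.Injective χ)
    (hv0 : ∀ s, v s ≠ 0) (hv : ∀ s i, f i (v s) = χ s i • v s) : LinearIndependent K v := by
  classical
  rw [linearIndependent_iff']
  intro t
  induction t using Finset.induction_on with
  | empty => simp
  | insert x t hx ih =>
    intro g hg
    have ht : ∀ y ∈ t, g y = 0 := by
      intro y hy
      obtain ⟨i, hi⟩ := Function.ne_iff.mp (hχ.ne (ne_of_mem_of_not_mem hy hx))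
      have hT s : (f i - χ x i • (1 : End K V)) (v s) = (χ s i - χ x i) • v s := by
        simp [hv, sub_smul]
      have h := congrArg (f i - χ x i • (1 : End K V)) hg
      simp only [Finset.sum_insert hx, map_add, map_sum, map_smul, hT, map_zero, sub_self,
        zero_smul, smul_zero, zero_add, smul_smul] at h
      exact (mul_eq_zero.mp (ih _ h y hy)).resolve_right (sub_ne_zero.mpr hi)
    rw [Finset.sum_insert hx, Finset.sum_eq_zero fun y hy => by rw [ht y hy, zero_smul],
      add_zero] at hg
    intro y hy
    rcases Finset.mem_insert.mp hy with rfl | hy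
    · exact (smul_eq_zero.mp hg).resolve_right (hv0 y)
    · exact ht y hy

end Diagonalization

section MultiIndex

variable {n m : ℕ}

theorem mdeg_add (α β : Fin n → ℕ) : mdeg (α + β) = mdeg α + mdeg β := by
  simp [mdeg, Finset.sum_add_distrib]

theorem mdeg_single (i : Fin n) : mdeg (Pi.single i 1 : Fin n → ℕ) = 1 := by
  simp [mdeg]

theorem eq_zero_of_mdeg_eq_zero {α : Fin n → ℕ} (h : mdeg α = 0) : α = 0 :=
  funext fun j => Finset.sum_eq_zero_iff.mp h j (Finset.mem_univ j)

theorem exists_eq_add_single_of_mdeg_eq_succ {α : Fin n → ℕ} {k : ℕ} (h : mdeg α = k + 1) :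
    ∃ β i, α = β + Pi.single i 1 ∧ mdeg β = k := by
  obtain ⟨i, hi⟩ : ∃ i, α i ≠ 0 := by
    by_contra! h0
    simp [mdeg, h0] at h
  have hle : Pi.single i 1 ≤ α := by
    intro j
    rcases eq_or_ne j i with rfl | hj <;> simp [*]
    omega
  refine ⟨α - Pi.single i 1, i, (tsub_add_cancel_of_le hle).symm, ?_⟩
  have := mdeg_add (α - Pi.single i 1) (Pi.single i 1)
  rw [tsub_add_cancel_of_le hle, mdeg_single] at this
  omega

theorem mem_Idx {α : Fin n → ℕ} : α ∈ Idx n m ↔ mdeg α ≤ m := by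
  refine ⟨fun h => (Finset.mem_filter.mp h).2, fun h => Finset.mem_filter.mpr ⟨?_, h⟩⟩
  refine Fintype.mem_piFinset.mpr fun i => Finset.mem_range.mpr (Nat.lt_succ_of_le ?_)
  exact (Finset.single_le_sum (fun j _ => Nat.zero_le (α j)) (Finset.mem_univ i)).trans h

theorem zero_mem_Idx : (0 : Fin n → ℕ) ∈ Idx n m :=
  mem_Idx.mpr (by simp [mdeg])

theorem mdeg_add_single_of_notMem_Idx {β : Fin n → ℕ} {i : Fin n} (hβ : β ∈ Idx n m)
    (h : β + Pi.single i 1 ∉ Idx n m) : mdeg (β + Pi.single i 1) = m + 1 := by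
  rw [mem_Idx, mdeg_add, mdeg_single] at *
  omega

end MultiIndex

section MultiplicationMatrix

variable {K : Type*} [Field K] {n m : ℕ}

theorem prod_pow_add_single (x : Fin n → K) (β : Fin n → ℕ) (i : Fin n) :
    ∏ j, x j ^ (β + Pi.single i 1 : Fin n → ℕ) j = x i * ∏ j, x j ^ β j := by
  simp only [Pi.add_apply, pow_add, Finset.prod_mul_distrib, mul_comm (∏ j, x j ^ β j)]
  congr 1
  simp [Pi.single_apply]

theorem monVec_zero (x : Fin n → K) : monVec (Idx n m) x ⟨0, zero_mem_Idx⟩ = 1 := by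
  simp [monVec]

theorem monVec_ne_zero (x : Fin n → K) : monVec (Idx n m) x ≠ 0 :=
  fun h => one_ne_zero ((monVec_zero x).symm.trans (congrFun h _))

variable (I : Finset (Fin n → ℕ)) (a : (Fin n → ℕ) → (Fin n → ℕ) → K)

theorem multMat_mulVec_of_add_single_mem (w : I → K) {i : Fin n} {β : I}
    (h : (β : Fin n → ℕ) + Pi.single i 1 ∈ I) :
    (multMat I a i *ᵥ w) β = w ⟨_, h⟩ := by
  rw [mulVec, dotProduct, Finset.sum_eq_single_of_mem ⟨_, h⟩ (Finset.mem_univ _)]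
  · simp [multMat, h]
  · intro γ _ hγ
    simp [multMat, h, Subtype.ext_iff.not.mp hγ]

theorem multMat_mulVec_monVec_of_add_single_notMem (x : Fin n → K) {i : Fin n} {β : I}
    (h : (β : Fin n → ℕ) + Pi.single i 1 ∉ I) :
    (multMat I a i *ᵥ monVec I x) β =
      ∑ γ ∈ I, a ((β : Fin n → ℕ) + Pi.single i 1) γ * ∏ j, x j ^ γ j := by
  simp only [mulVec, dotProduct, multMat, h, if_false, monVec]
  exact Finset.sum_coe_sort I fun γ => a ((β : Fin n → ℕ) + Pi.single i 1) γ * ∏ j, x j ^ γ j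

theorem isSol_iff_multMat_mulVec_monVec (x : Fin n → K) :
    IsSol m a x ↔
      ∀ i, multMat (Idx n m) a i *ᵥ monVec (Idx n m) x = x i • monVec (Idx n m) x := by
  constructor
  · intro hx i
    ext β
    by_cases h : (β : Fin n → ℕ) + Pi.single i 1 ∈ Idx n m
    · rw [multMat_mulVec_of_add_single_mem _ _ _ h]
      exact prod_pow_add_single x β i
    · rw [multMat_mulVec_monVec_of_add_single_notMem _ _ _ h,
        ← hx _ (mdeg_add_single_of_notMem_Idx β.2 h)]
      exact prod_pow_add_single x β i
  · intro hx α hα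
    obtain ⟨β, i, rfl, hβ⟩ := exists_eq_add_single_of_mdeg_eq_succ hα
    have hβI : β ∈ Idx n m := mem_Idx.mpr hβ.le
    have hβi : β + Pi.single i 1 ∉ Idx n m := by
      rw [mem_Idx, hα]
      omega
    have h := congrFun (hx i) ⟨β, hβI⟩
    rw [multMat_mulVec_monVec_of_add_single_notMem _ _ _ hβi] at h
    rw [prod_pow_add_single]
    exact h.symm

theorem eq_smul_monVec_of_multMat_mulVec_eq_smul {w : Idx n m → K} {χ : Fin n → K}
    (hw : ∀ i, multMat (Idx n m) a i *ᵥ w = χ i • w) :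
    w = w ⟨0, zero_mem_Idx⟩ • monVec (Idx n m) χ := by
  suffices h : ∀ k (β : Idx n m), mdeg (β : Fin n → ℕ) = k →
      w β = monVec (Idx n m) χ β * w ⟨0, zero_mem_Idx⟩ by
    ext β
    rw [h _ β rfl, Pi.smul_apply, smul_eq_mul, mul_comm]
  intro k
  induction k with
  | zero =>
    intro β hβ
    obtain rfl : β = ⟨0, zero_mem_Idx⟩ := Subtype.ext (eq_zero_of_mdeg_eq_zero hβ)
    rw [monVec_zero, one_mul]
  | succ k ih =>
    intro β hβ
    obtain ⟨β', i, hsplit, hβ'⟩ := exists_eq_add_single_of_mdeg_eq_succ hβ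
    have hβ'I : β' ∈ Idx n m := mem_Idx.mpr (by have := mem_Idx.mp β.2; omega)
    have hmem : β' + Pi.single i 1 ∈ Idx n m := hsplit ▸ β.2
    have h := congrFun (hw i) ⟨β', hβ'I⟩
    rw [multMat_mulVec_of_add_single_mem _ _ _ hmem, Pi.smul_apply, ih ⟨β', hβ'I⟩ hβ'] at h
    obtain rfl : β = ⟨β' + Pi.single i 1, hmem⟩ := Subtype.ext hsplit
    simp only [h, monVec, prod_pow_add_single, smul_eq_mul, mul_assoc]

theorem isSol_of_multMat_mulVec_eq_smul {w : Idx n m → K} {χ : Fin n → K} (hw0 : w ≠ 0)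
    (hw : ∀ i, multMat (Idx n m) a i *ᵥ w = χ i • w) : IsSol m a χ := by
  have hc : w ⟨0, zero_mem_Idx⟩ ≠ 0 := fun hc =>
    hw0 (by rw [eq_smul_monVec_of_multMat_mulVec_eq_smul a hw, hc, zero_smul])
  refine (isSol_iff_multMat_mulVec_monVec a χ).mpr fun i => smul_right_injective _ hc ?_
  have h := hw i
  rwa [eq_smul_monVec_of_multMat_mulVec_eq_smul a hw, mulVec_smul, smul_comm] at h

theorem linearIndependent_monVec_isSol :
    LinearIndependent K fun x : {x | IsSol m a x} => monVec (Idx n m) x.1 :=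
  Module.End.linearIndependent_of_apply_eq_smul (fun i => (multMat (Idx n m) a i).mulVecLin)
    Subtype.val_injective (fun _ => monVec_ne_zero _)
    (fun x i => (isSol_iff_multMat_mulVec_monVec a x.1).mp x.2 i)

theorem iInf_eigenspace_multMat_le_span_monVec_isSol (χ : Fin n → K) :
    ⨅ i, Module.End.eigenspace (multMat (Idx n m) a i).mulVecLin (χ i) ≤
      Submodule.span K (Set.range fun x : {x | IsSol m a x} => monVec (Idx n m) x.1) := by
  intro w hw
  have hw' i : multMat (Idx n m) a i *ᵥ w = χ i • w :=
    Module.End.mem_eigenspace_iff.mp (Submodule.mem_iInf _ |>.mp hw i)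
  rcases eq_or_ne w 0 with rfl | hw0
  · exact zero_mem _
  · rw [eq_smul_monVec_of_multMat_mulVec_eq_smul a hw']
    exact Submodule.smul_mem _ _
      (Submodule.subset_span ⟨⟨χ, isSol_of_multMat_mulVec_eq_smul a hw0 hw'⟩, rfl⟩)

end MultiplicationMatrix

theorem stmt_6_general {K : Type*} [Field K] {n m : ℕ}
    (a : (Fin n → ℕ) → (Fin n → ℕ) → K) :
    {x : Fin n → K | IsSol m a x}.ncard = (Idx n m).card ↔
      (∀ i j, multMat (Idx n m) a i * multMat (Idx n m) a j
          = multMat (Idx n m) a j * multMat (Idx n m) a i) ∧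
      ∀ i, Diagonalizable (multMat (Idx n m) a i) := by
  have hli := linearIndependent_monVec_isSol (m := m) a
  constructor
  · intro hcard
    have : Finite {x | IsSol m a x} :=
      Set.finite_of_ncard_pos (hcard ▸ Finset.card_pos.mpr ⟨0, zero_mem_Idx⟩)
    obtain ⟨e⟩ : Nonempty (Idx n m ≃ {x | IsSol m a x}) := by
      rw [← Finite.card_eq, Nat.card_coe_set_eq, hcard, Nat.card_eq_finsetCard]
    exact Matrix.commute_and_diagonalizable_of_linearIndependent _ (hli.comp e e.injective)
      (fun i γ => (e γ).1 i) (fun i γ => (isSol_iff_multMat_mulVec_monVec a _).mp (e γ).2 i)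
  · rintro ⟨hcomm, hdiag⟩
    have hspan : ⊤ ≤ Submodule.span K
        (Set.range fun x : {x | IsSol m a x} => monVec (Idx n m) x.1) := by
      rw [← Matrix.iSup_iInf_eigenspace_eq_top_of_commute _ hcomm hdiag]
      exact iSup_le (iInf_eigenspace_multMat_le_span_monVec_isSol a)
    rw [← Nat.card_coe_set_eq, ← Module.finrank_eq_nat_card_basis (Module.Basis.mk hli hspan),
      Module.finrank_fintype_fun_eq_card, Fintype.card_coe]

/-- The system has the maximal possible number `#I` of distinct solutions iff the
multiplication matrices pairwise commute and each is diagonalizable. -/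
theorem stmt_6 {K : Type*} [Field K] [IsAlgClosed K] {n m : ℕ}
    (a : (Fin n → ℕ) → (Fin n → ℕ) → K) :
    {x : Fin n → K | IsSol m a x}.ncard = (Idx n m).card ↔
      (∀ i j, multMat (Idx n m) a i * multMat (Idx n m) a j
          = multMat (Idx n m) a j * multMat (Idx n m) a i) ∧
      ∀ i, Diagonalizable (multMat (Idx n m) a i) :=
  stmt_6_general a
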